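/- Let μ > δ' > 0, η_0 ∈ ℕ, and suppose (τ_ℓ)_{ℓ≥0} and (η_ℓ)_{ℓ≥0} are nonnegative sequences satisfying |η_ℓ − μℓ − η_0| ≤ δ'(ℓ+η_0) for all ℓ, and τ_ℓ − τ_{ℓ−1} ≤ 2^{δ'(ℓ−1+η_0)}·2^{2η_{ℓ−1}} for all ℓ≥1, with τ_0=0. Then for every ν̂ ∈ (0,1) there exists δ̂ > 0 such that if δ' ≤ δ̂ and η_0 is large enough (depending only on ν̂, μ), then τ_ℓ^{1−ν̂} ≤ (1/2)·2^{2η_ℓ} for all ℓ ≥ 0. -/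

import Mathlib

/-!
By the upper cone bound on η_k, the increment τ_{k+1} - τ_k is at most 2^{(2+3δ')η₀ + (2μ+3δ')k},
so the telescoping sum τ_ℓ is bounded by a geometric series: τ_ℓ ≤ 2^{K + (2+3δ')η₀ + (2μ+3δ')ℓ}
with 2^K = (2^{2μ} - 1)⁻¹. Raising to the power 1 - ν̂ and comparing with the lower cone bound
2η_ℓ ≥ 2(1-δ')η₀ + 2(μ-δ')ℓ, the loss of ν̂ in the exponent absorbs the O(δ') terms once
5δ' ≤ min(ν̂, ν̂μ), and absorbs K and the factor 1/2 once ν̂η₀ ≥ |K| + 1.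
-/

open Finset Real

theorem le_mul_pow_div_sub_one_of_sub_le {τ : ℕ → ℝ} {c r : ℝ} (hc : 0 ≤ c) (hr : 1 < r)
    (h0 : τ 0 = 0) (h : ∀ k, τ (k + 1) - τ k ≤ c * r ^ k) (n : ℕ) :
    τ n ≤ c * r ^ n / (r - 1) :=
  calc τ n = ∑ k ∈ range n, (τ (k + 1) - τ k) := by rw [sum_range_sub, h0, sub_zero]
    _ ≤ ∑ k ∈ range n, c * r ^ k := sum_le_sum fun k _ => h k
    _ = c * ((r ^ n - 1) / (r - 1)) := by rw [← mul_sum, geom_sum_eq hr.ne']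
    _ ≤ c * r ^ n / (r - 1) := by
      rw [mul_div_assoc]
      gcongr
      linarith

theorem two_rpow_add_mul_natCast (a b : ℝ) (k : ℕ) :
    (2 : ℝ) ^ (a + b * k) = 2 ^ a * ((2 : ℝ) ^ b) ^ k := by
  rw [rpow_add two_pos, rpow_mul zero_le_two, rpow_natCast]

theorem rpow_le_half_mul_two_rpow {t E F p : ℝ} (ht : 0 ≤ t) (hp : 0 ≤ p) (htE : t ≤ 2 ^ E)
    (hEF : p * E ≤ F - 1) : t ^ p ≤ 1 / 2 * (2 : ℝ) ^ F :=
  calc t ^ p ≤ ((2 : ℝ) ^ E) ^ p := rpow_le_rpow ht htE hp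
    _ = 2 ^ (p * E) := by rw [← rpow_mul zero_le_two, mul_comm]
    _ ≤ 2 ^ (F - 1) := rpow_le_rpow_of_exponent_le one_le_two hEF
    _ = 1 / 2 * 2 ^ F := by rw [rpow_sub two_pos, rpow_one]; ring

theorem two_rpow_dwell_le {μ δ' e0 e : ℝ} (k : ℕ) (hup : e ≤ μ * k + e0 + δ' * (k + e0)) :
    (2 : ℝ) ^ (δ' * (((k + 1 : ℕ) : ℝ) - 1 + e0)) * 2 ^ (2 * e) ≤
      2 ^ ((2 + 3 * δ') * e0) * ((2 : ℝ) ^ (2 * μ + 3 * δ')) ^ k := by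
  rw [← rpow_add two_pos, ← two_rpow_add_mul_natCast]
  apply rpow_le_rpow_of_exponent_le one_le_two
  push_cast
  linarith

theorem cone_exponent_le {μ ν δ' K e0 e ℓ : ℝ} (hδ' : 0 ≤ δ') (hδν : 5 * δ' ≤ ν)
    (hδνμ : 5 * δ' ≤ ν * μ) (hℓ : 0 ≤ ℓ) (he0 : 0 ≤ e0) (hK : (1 - ν) * K + 1 ≤ ν * e0)
    (hlow : μ * ℓ + e0 - δ' * (ℓ + e0) ≤ e) :
    (1 - ν) * (K + ((2 + 3 * δ') * e0 + (2 * μ + 3 * δ') * ℓ)) ≤ 2 * e - 1 := by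
  nlinarith [mul_nonneg (sub_nonneg.2 hδν) he0, mul_nonneg (sub_nonneg.2 hδνμ) hℓ,
    mul_nonneg (mul_nonneg hδ' he0) (by linarith : 0 ≤ ν),
    mul_nonneg (mul_nonneg hδ' hℓ) (by linarith : 0 ≤ ν), mul_nonneg (by linarith : 0 ≤ ν * μ) hℓ]

/-- Deterministic content of Proposition 6.2(ii): if the cone bound
|η_ℓ − μℓ − η₀| ≤ δ'(ℓ+η₀) holds and the dwell times satisfy
τ_ℓ − τ_{ℓ-1} ≤ 2^{δ'(ℓ−1+η₀)}·2^{2η_{ℓ−1}}, then for every ν̂ ∈ (0,1) there is δ̂ > 0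
such that for δ' ≤ δ̂ and η₀ large enough (depending only on ν̂ and μ),
τ_ℓ^{1−ν̂} ≤ (1/2)·2^{2η_ℓ} for all ℓ. -/
theorem stmt_12 (μ : ℝ) (hμ : 0 < μ) (nu : ℝ) (hnu0 : 0 < nu) (hnu1 : nu < 1) :
    ∃ deltahat > (0:ℝ), ∃ N : ℝ, ∀ (δ' : ℝ) (η τ : ℕ → ℝ),
      0 < δ' → δ' < μ → δ' ≤ deltahat → N ≤ η 0 →
      (∀ ℓ : ℕ, 0 ≤ η ℓ) → (∀ ℓ : ℕ, 0 ≤ τ ℓ) → τ 0 = 0 →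
      (∀ ℓ : ℕ, |η ℓ - μ * ℓ - η 0| ≤ δ' * (ℓ + η 0)) →
      (∀ ℓ : ℕ, 1 ≤ ℓ → τ ℓ - τ (ℓ - 1) ≤
        (2:ℝ) ^ (δ' * ((ℓ:ℝ) - 1 + η 0)) * (2:ℝ) ^ (2 * η (ℓ - 1))) →
      ∀ ℓ : ℕ, (τ ℓ) ^ (1 - nu) ≤ (1/2) * (2:ℝ) ^ (2 * η ℓ) := by
  have hD : 0 < (2 : ℝ) ^ (2 * μ) - 1 := by
    linarith [one_lt_rpow one_lt_two (by positivity : 0 < 2 * μ)]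
  set K := -logb 2 ((2 : ℝ) ^ (2 * μ) - 1)
  have hK : (2 : ℝ) ^ K = ((2 : ℝ) ^ (2 * μ) - 1)⁻¹ := by
    rw [rpow_neg zero_le_two, rpow_logb two_pos (by norm_num) hD]
  refine ⟨min nu (nu * μ) / 5, by positivity, (|K| + 1) / nu, ?_⟩
  intro δ' η τ hδ' _ hδ hN hη hτ hτ0 hcone hdwell ℓ
  set a := (2 + 3 * δ') * η 0
  set b := 2 * μ + 3 * δ'
  have hinc (k : ℕ) : τ (k + 1) - τ k ≤ 2 ^ a * ((2 : ℝ) ^ b) ^ k := by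
    have h := hdwell (k + 1) (by omega)
    rw [Nat.add_sub_cancel] at h
    exact h.trans (two_rpow_dwell_le k (by linarith [(abs_le.1 (hcone k)).2]))
  have hτℓ : τ ℓ ≤ 2 ^ (K + (a + b * ℓ)) :=
    calc τ ℓ ≤ 2 ^ a * ((2 : ℝ) ^ b) ^ ℓ / ((2 : ℝ) ^ b - 1) :=
          le_mul_pow_div_sub_one_of_sub_le (by positivity)
            (one_lt_rpow one_lt_two (by positivity)) hτ0 hinc ℓ
      _ ≤ 2 ^ a * ((2 : ℝ) ^ b) ^ ℓ / ((2 : ℝ) ^ (2 * μ) - 1) := by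
          gcongr
          · norm_num
          · linarith
      _ = 2 ^ (K + (a + b * ℓ)) := by
          rw [rpow_add two_pos K, hK, two_rpow_add_mul_natCast]; field_simp
  refine rpow_le_half_mul_two_rpow (hτ ℓ) (by linarith) hτℓ ?_
  have hK' : (1 - nu) * K + 1 ≤ nu * η 0 := by
    rw [div_le_iff₀ hnu0] at hN
    nlinarith [le_abs_self K, abs_nonneg K]
  exact cone_exponent_le (μ := μ) hδ'.le (by linarith [min_le_left nu (nu * μ)])
    (by linarith [min_le_right nu (nu * μ)]) (Nat.cast_nonneg ℓ) (hη 0) hK'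
    (by linarith [(abs_le.1 (hcone ℓ)).1])
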